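/- arXiv:2510.05303 — 8 statements merged into one kernel-verified Lean document; each statement's English description precedes it below -/
import Mathlib

section
/- For a nonzero n×n complex matrix A, the following are equivalent: (i) ‖AB‖ = ‖A‖·‖B‖ for every n×n complex matrix B (spectral norm); (ii) A is a nonzero scalar multiple of a unitary matrix. -/
open scoped Matrix Matrix.Norms.L2Operator

noncomputable section

/-!
Testing `‖AB‖ = ‖A‖‖B‖` on the rank-one operators `B = |x⟩⟨x|` gives `‖Ax‖ = ‖A‖‖x‖` for every
vector `x`, so `‖A‖⁻¹ A` is an isometry, i.e. unitary. Conversely, left multiplication by a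
unitary preserves the norm in any C⋆-algebra.
-/

open ContinuousLinearMap InnerProductSpace

namespace ContinuousLinearMap

variable {𝕜 E F : Type*} [RCLike 𝕜]

theorem norm_apply_eq_of_forall_norm_comp [NormedAddCommGroup E] [InnerProductSpace 𝕜 E]
    [NormedAddCommGroup F] [NormedSpace 𝕜 F] (f : E →L[𝕜] F)
    (hf : ∀ g : E →L[𝕜] E, ‖f ∘L g‖ = ‖f‖ * ‖g‖) (x : E) : ‖f x‖ = ‖f‖ * ‖x‖ := by
  rcases eq_or_ne x 0 with rfl | hx
  · simp
  have h := hf (rankOne 𝕜 x x)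
  rw [comp_rankOne, norm_rankOne, norm_rankOne, ← mul_assoc] at h
  exact mul_right_cancel₀ (norm_ne_zero_iff.2 hx) h

theorem adjoint_comp_self_inv_norm_smul_eq_one [NormedAddCommGroup E] [InnerProductSpace 𝕜 E]
    [CompleteSpace E] [NormedAddCommGroup F] [InnerProductSpace 𝕜 F] [CompleteSpace F]
    {f : E →L[𝕜] F} (h0 : f ≠ 0) (hf : ∀ x, ‖f x‖ = ‖f‖ * ‖x‖) :
    adjoint ((‖f‖⁻¹ : 𝕜) • f) ∘L ((‖f‖⁻¹ : 𝕜) • f) = 1 := by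
  refine (norm_map_iff_adjoint_comp_self _).1 fun x => ?_
  rw [smul_apply, norm_smul, hf, norm_inv, RCLike.norm_ofReal, abs_norm,
    inv_mul_cancel_left₀ (norm_ne_zero_iff.2 h0)]

end ContinuousLinearMap

theorem CStarRing.norm_smul_unitary_mul {𝕜 E : Type*} [NormedField 𝕜] [NormedRing E]
    [StarRing E] [CStarRing E] [NormedAlgebra 𝕜 E] [Nontrivial E] (c : 𝕜) {U : E}
    (hU : U ∈ unitary E) (B : E) : ‖(c • U) * B‖ = ‖c • U‖ * ‖B‖ := by
  rw [smul_mul_assoc, norm_smul, norm_smul, norm_coe_unitary_mul ⟨U, hU⟩, norm_of_mem_unitary hU,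
    mul_one]

namespace Matrix

variable {n 𝕜 : Type*} [Fintype n] [DecidableEq n] [RCLike 𝕜]

theorem conjTranspose_mul_self_inv_norm_smul_eq_one {A : Matrix n n 𝕜} (hA : A ≠ 0)
    (h : ∀ B : Matrix n n 𝕜, ‖A * B‖ = ‖A‖ * ‖B‖) :
    ((‖A‖⁻¹ : 𝕜) • A)ᴴ * ((‖A‖⁻¹ : 𝕜) • A) = 1 := by
  set f := toEuclideanCLM (n := n) (𝕜 := 𝕜) A
  have hf (g : EuclideanSpace 𝕜 n →L[𝕜] EuclideanSpace 𝕜 n) : ‖f ∘L g‖ = ‖f‖ * ‖g‖ := by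
    simpa [f, ← l2_opNorm_toEuclideanCLM, mul_def] using
      h ((toEuclideanCLM (n := n) (𝕜 := 𝕜)).symm g)
  apply EquivLike.injective (toEuclideanCLM (n := n) (𝕜 := 𝕜))
  rw [map_mul, map_one, ← star_eq_conjTranspose, map_star, star_eq_adjoint, mul_def, map_smul,
    ← l2_opNorm_toEuclideanCLM]
  exact adjoint_comp_self_inv_norm_smul_eq_one (by simpa [f] using hA)
    (norm_apply_eq_of_forall_norm_comp f hf)

end Matrix

/-- For a nonzero n×n complex matrix A: ‖AB‖ = ‖A‖‖B‖ for all B iff A is a nonzero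
scalar multiple of a unitary matrix. -/
theorem stmt0 {n : ℕ} (A : Matrix (Fin n) (Fin n) ℂ) (hA : A ≠ 0) :
    (∀ B : Matrix (Fin n) (Fin n) ℂ, ‖A * B‖ = ‖A‖ * ‖B‖) ↔
      (∃ (c : ℂ) (U : Matrix (Fin n) (Fin n) ℂ), c ≠ 0 ∧ Uᴴ * U = 1 ∧ A = c • U) := by
  have : Nontrivial (Matrix (Fin n) (Fin n) ℂ) := nontrivial_of_ne A 0 hA
  constructor
  · intro h
    have hAc : (‖A‖ : ℂ) ≠ 0 := by simpa using hA
    refine ⟨‖A‖, (‖A‖⁻¹ : ℂ) • A, hAc, Matrix.conjTranspose_mul_self_inv_norm_smul_eq_one hA h, ?_⟩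
    rw [smul_smul, mul_inv_cancel₀ hAc, one_smul]
  · rintro ⟨c, U, -, hU, rfl⟩
    exact CStarRing.norm_smul_unitary_mul c (Matrix.mem_unitaryGroup_iff'.2 hU)
end
end

section
/- For a nonzero n×n real matrix A, ‖AB‖ = ‖A‖·‖B‖ holds for every n×n real matrix B (spectral norm) if and only if A is a nonzero scalar multiple of an orthogonal matrix. -/
/-!
Testing `‖A B‖ = ‖A‖ ‖B‖` on the rank-one operators `y ↦ g y • x`, with `g` a norm-one functional,
gives `‖A x‖ = ‖A‖ ‖x‖` for every vector `x`; so `‖A‖⁻¹ A` is an isometry, i.e. orthogonal.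
Conversely, multiplication by a unitary element of a C⋆-ring preserves norms, and unitaries have
norm one.
-/

open scoped Matrix Matrix.Norms.L2Operator

open Matrix

theorem ContinuousLinearMap.norm_apply_eq_of_forall_norm_comp_s1 {𝕜 E F : Type*} [RCLike 𝕜]
    [NormedAddCommGroup E] [NormedSpace 𝕜 E] [SeminormedAddCommGroup F] [NormedSpace 𝕜 F]
    (T : E →L[𝕜] F) (h : ∀ S : E →L[𝕜] E, ‖T ∘L S‖ = ‖T‖ * ‖S‖) (x : E) :
    ‖T x‖ = ‖T‖ * ‖x‖ := by
  rcases eq_or_ne x 0 with rfl | hx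
  · simp
  obtain ⟨g, hg, -⟩ := exists_dual_vector 𝕜 x (norm_ne_zero_iff.mpr hx)
  have hTx : T ∘L g.smulRight x = g.smulRight (T x) := by ext; simp
  simpa [hTx, norm_smulRight_apply, hg] using h (g.smulRight x)

theorem CStarRing.norm_smul_mul_of_mem_unitary {𝕜 E : Type*} [NormedField 𝕜] [NormedRing E]
    [StarRing E] [CStarRing E] [NormedAlgebra 𝕜 E] [Nontrivial E] (c : 𝕜) {U : E}
    (hU : U ∈ unitary E) (B : E) : ‖c • U * B‖ = ‖c • U‖ * ‖B‖ := by
  rw [smul_mul_assoc, norm_smul, norm_smul, norm_mem_unitary_mul B hU, norm_of_mem_unitary hU,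
    mul_one]

namespace Matrix

variable {𝕜 ι : Type*} [RCLike 𝕜] [Fintype ι] [DecidableEq ι]

theorem inv_norm_smul_mem_unitaryGroup {A : Matrix ι ι 𝕜} (hA : A ≠ 0)
    (h : ∀ B : Matrix ι ι 𝕜, ‖A * B‖ = ‖A‖ * ‖B‖) :
    ((‖A‖⁻¹ : ℝ) : 𝕜) • A ∈ unitaryGroup ι 𝕜 := by
  set T := toEuclideanCLM (n := ι) (𝕜 := 𝕜)
  have hT : ∀ S, ‖T A ∘L S‖ = ‖T A‖ * ‖S‖ := fun S => by
    have hS := h (T.symm S)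
    change ‖T (A * T.symm S)‖ = ‖T A‖ * ‖T (T.symm S)‖ at hS
    rwa [map_mul, StarAlgEquiv.apply_symm_apply, ContinuousLinearMap.mul_def] at hS
  have hiso : ∀ x, ‖T (((‖A‖⁻¹ : ℝ) : 𝕜) • A) x‖ = ‖x‖ := fun x => by
    rw [map_smul, _root_.smul_apply, norm_smul, (T A).norm_apply_eq_of_forall_norm_comp_s1 hT x,
      l2_opNorm_toEuclideanCLM, RCLike.norm_ofReal, abs_inv, abs_norm,
      inv_mul_cancel_left₀ (norm_ne_zero_iff.mpr hA)]
  rw [mem_unitaryGroup_iff']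
  apply EquivLike.injective T
  rw [map_mul, map_star, map_one, ContinuousLinearMap.star_eq_adjoint]
  exact (ContinuousLinearMap.norm_map_iff_adjoint_comp_self _).mp hiso

end Matrix

/-- For a nonzero n×n real matrix A: ‖AB‖ = ‖A‖‖B‖ for all B iff A is a nonzero
scalar multiple of an orthogonal matrix. -/
theorem stmt1 {n : ℕ} (A : Matrix (Fin n) (Fin n) ℝ) (hA : A ≠ 0) :
    (∀ B : Matrix (Fin n) (Fin n) ℝ, ‖A * B‖ = ‖A‖ * ‖B‖) ↔
      (∃ (c : ℝ) (U : Matrix (Fin n) (Fin n) ℝ), c ≠ 0 ∧ Uᵀ * U = 1 ∧ A = c • U) := by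
  constructor
  · intro h
    refine ⟨‖A‖, ‖A‖⁻¹ • A, norm_ne_zero_iff.mpr hA, ?_, ?_⟩
    · exact (mem_orthogonalGroup_iff' _ _).mp (inv_norm_smul_mem_unitaryGroup hA h)
    · rw [smul_smul, mul_inv_cancel₀ (norm_ne_zero_iff.mpr hA), one_smul]
  · rintro ⟨c, U, -, hU, rfl⟩ B
    have : Nontrivial (Matrix (Fin n) (Fin n) ℝ) := nontrivial_of_ne _ _ hA
    exact CStarRing.norm_smul_mul_of_mem_unitary c ((mem_orthogonalGroup_iff' _ _).mpr hU) B
end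

section
/- Let A, B be nonzero n×n complex matrices. Then ‖AB*‖ = ‖A‖·‖B‖ (spectral norm) if and only if there exists a unit vector y such that ‖Ay‖ = ‖A‖ and ‖By‖ = ‖B‖. -/
/-!
If a unit vector `x` attains the norm of `T`, equality in Cauchy–Schwarz forces
`T† T x = ‖T‖² x`. Given a common norm-attaining unit vector `y` of `T` and `S`, this makes
`T S† (S y) = ‖S‖² T y`, so `T S†` reaches `‖T‖ ‖S‖` at `S y / ‖S‖`. Conversely, let a unit
vector `x` attain `‖T S†‖ = ‖T‖ ‖S‖` (finite dimension); then `w = S† x` has norm `‖S‖`, so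
`S w = ‖S‖² x`, and `w / ‖S‖` attains both norms.
-/

open scoped Matrix Matrix.Norms.L2Operator

namespace ContinuousLinearMap

variable {𝕜 E F : Type*} [RCLike 𝕜]

theorem exists_norm_eq_one_norm_apply_eq_opNorm [NormedAddCommGroup E] [NormedSpace 𝕜 E]
    [SeminormedAddCommGroup F] [NormedSpace 𝕜 F] [FiniteDimensional 𝕜 E] [Nontrivial E]
    (f : E →L[𝕜] F) : ∃ x : E, ‖x‖ = 1 ∧ ‖f x‖ = ‖f‖ := by
  let : NormedSpace ℝ E := .restrictScalars ℝ 𝕜 E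
  have : ProperSpace E := FiniteDimensional.proper_rclike 𝕜 E
  have hsphere : (Metric.sphere (0 : E) 1).Nonempty := NormedSpace.sphere_nonempty.mpr zero_le_one
  obtain ⟨x, hx, hfx⟩ := ((isCompact_sphere (0 : E) 1).image (by fun_prop)).sSup_mem
    (hsphere.image fun x => ‖f x‖)
  exact ⟨x, mem_sphere_zero_iff_norm.mp hx, hfx.trans f.sSup_sphere_eq_norm⟩

variable [NormedAddCommGroup E] [InnerProductSpace 𝕜 E] [CompleteSpace E]
  [NormedAddCommGroup F] [InnerProductSpace 𝕜 F] [CompleteSpace F]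

theorem adjoint_apply_apply_eq_of_norm_apply_eq_opNorm (T : E →L[𝕜] F) {x : E} (hx : ‖x‖ = 1)
    (hTx : ‖T x‖ = ‖T‖) : adjoint T (T x) = ((‖T‖ ^ 2 : ℝ) : 𝕜) • x := by
  have hnorm : ‖((‖T‖ ^ 2 : ℝ) : 𝕜) • x‖ = ‖T‖ ^ 2 := by
    rw [norm_smul, hx, mul_one, RCLike.norm_ofReal, abs_of_nonneg (by positivity)]
  refine eq_of_norm_le_re_inner_eq_norm_sq (𝕜 := 𝕜) ?_ ?_
  · calc ‖adjoint T (T x)‖ ≤ ‖adjoint T‖ * ‖T x‖ := le_opNorm _ _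
      _ = ‖((‖T‖ ^ 2 : ℝ) : 𝕜) • x‖ := by rw [LinearIsometryEquiv.norm_map, hTx, hnorm, sq]
  · rw [hnorm, inner_smul_right, adjoint_inner_left, inner_self_eq_norm_sq_to_K, hTx]
    norm_cast
    ring

theorem norm_comp_adjoint_eq_of_norm_apply_eq_opNorm (T S : E →L[𝕜] F) {y : E} (hy : ‖y‖ = 1)
    (hTy : ‖T y‖ = ‖T‖) (hSy : ‖S y‖ = ‖S‖) : ‖T ∘L adjoint S‖ = ‖T‖ * ‖S‖ := by
  refine le_antisymm ?_ ?_
  · calc ‖T ∘L adjoint S‖ ≤ ‖T‖ * ‖adjoint S‖ := opNorm_comp_le _ _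
      _ = ‖T‖ * ‖S‖ := by rw [LinearIsometryEquiv.norm_map]
  rcases (norm_nonneg S).eq_or_lt with hS | hS
  · rw [← hS, mul_zero]
    exact norm_nonneg _
  have hSSy : (T ∘L adjoint S) (S y) = ((‖S‖ ^ 2 : ℝ) : 𝕜) • T y := by
    rw [comp_apply, adjoint_apply_apply_eq_of_norm_apply_eq_opNorm S hy hSy, map_smul]
  refine le_of_mul_le_mul_left ?_ hS
  calc ‖S‖ * (‖T‖ * ‖S‖) = ‖(T ∘L adjoint S) (S y)‖ := by
        rw [hSSy, norm_smul, hTy, RCLike.norm_ofReal, abs_of_nonneg (by positivity)]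
        ring
    _ ≤ ‖T ∘L adjoint S‖ * ‖S y‖ := le_opNorm _ _
    _ = ‖S‖ * ‖T ∘L adjoint S‖ := by rw [hSy, mul_comm]

theorem exists_norm_apply_eq_opNorm_of_norm_comp_adjoint_eq [FiniteDimensional 𝕜 F]
    {T S : E →L[𝕜] F} (hT : T ≠ 0) (hS : S ≠ 0) (h : ‖T ∘L adjoint S‖ = ‖T‖ * ‖S‖) :
    ∃ y : E, ‖y‖ = 1 ∧ ‖T y‖ = ‖T‖ ∧ ‖S y‖ = ‖S‖ := by
  have hTpos : 0 < ‖T‖ := norm_pos_iff.mpr hT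
  have hSpos : 0 < ‖S‖ := norm_pos_iff.mpr hS
  obtain ⟨e, he⟩ := DFunLike.ne_iff.mp hS
  have : Nontrivial F := nontrivial_of_ne _ _ he
  obtain ⟨x, hx, hTSx⟩ := exists_norm_eq_one_norm_apply_eq_opNorm (T ∘L adjoint S)
  rw [h, comp_apply] at hTSx
  set w := adjoint S x
  have hw : ‖w‖ = ‖S‖ := by
    refine le_antisymm ?_ (le_of_mul_le_mul_left ?_ hTpos)
    · simpa [hx] using (adjoint S).le_opNorm x
    · simpa [hTSx] using T.le_opNorm w
  have hSw : S w = ((‖S‖ ^ 2 : ℝ) : 𝕜) • x := by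
    simpa using adjoint_apply_apply_eq_of_norm_apply_eq_opNorm (adjoint S) hx (by simpa using hw)
  refine ⟨((‖S‖⁻¹ : ℝ) : 𝕜) • w, ?_, ?_, ?_⟩ <;>
    simp only [map_smul, norm_smul, RCLike.norm_ofReal, abs_inv, abs_pow, abs_norm, hw, hTSx,
      hSw, hx]
  all_goals field_simp

end ContinuousLinearMap

/-- ‖ABᴴ‖ = ‖A‖‖B‖ iff A and B have a common norm-attaining unit vector. -/
theorem stmt3 {n : ℕ} (A B : Matrix (Fin n) (Fin n) ℂ) (hA : A ≠ 0) (hB : B ≠ 0) :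
    ‖A * Bᴴ‖ = ‖A‖ * ‖B‖ ↔
      ∃ y : EuclideanSpace ℂ (Fin n), ‖y‖ = 1 ∧
        ‖Matrix.toEuclideanCLM (𝕜 := ℂ) A y‖ = ‖A‖ ∧
        ‖Matrix.toEuclideanCLM (𝕜 := ℂ) B y‖ = ‖B‖ := by
  set T := Matrix.toEuclideanCLM (𝕜 := ℂ) A
  set S := Matrix.toEuclideanCLM (𝕜 := ℂ) B
  have hT : T ≠ 0 := (map_ne_zero_iff _ Matrix.toEuclideanCLM.injective).mpr hA
  have hS : S ≠ 0 := (map_ne_zero_iff _ Matrix.toEuclideanCLM.injective).mpr hB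
  have hTS : Matrix.toEuclideanCLM (𝕜 := ℂ) (A * Bᴴ) = T ∘L ContinuousLinearMap.adjoint S := by
    rw [map_mul, ← Matrix.star_eq_conjTranspose, map_star, ContinuousLinearMap.star_eq_adjoint,
      ContinuousLinearMap.mul_def]
  rw [Matrix.cstar_norm_def (A * Bᴴ), hTS, Matrix.cstar_norm_def A, Matrix.cstar_norm_def B]
  exact ⟨ContinuousLinearMap.exists_norm_apply_eq_opNorm_of_norm_comp_adjoint_eq hT hS,
    fun ⟨_, hy, hTy, hSy⟩ =>
      ContinuousLinearMap.norm_comp_adjoint_eq_of_norm_apply_eq_opNorm T S hy hTy hSy⟩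
end

section
/- Let A be a nonscalar 2×2 complex matrix. Then A + tI is a scalar multiple of a unitary matrix for every real t if and only if A ∈ ℝI + 𝔸₂⁰(ℂ), the set of sums of a real multiple of the identity and a trace-zero skew-Hermitian matrix. -/
/-!
A matrix `M` is a scalar multiple of a unitary iff `Mᴴ M` is a real scalar matrix. Since
`(A + t)ᴴ (A + t) = Aᴴ A + t (Aᴴ + A) + t²`, this holding at `t = 0, 1` forces `Aᴴ + A = 2r` for a
real `r`, i.e. `K = A - r` is skew-Hermitian, and then `-K² = Kᴴ K` is scalar. By Cayley–Hamilton
`K² = tr K • K - det K`, so a nonscalar `K` with scalar square has trace zero. Conversely, for a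
traceless skew-Hermitian `K`, `(r + t - K)(r + t + K) = (r + t)² + det K`, and `det K` is real
because `conj (det K) = det Kᴴ = det (-K) = det K`.
-/

open Matrix ComplexOrder

namespace Matrix

lemma mul_self_eq_trace_smul_sub_det_smul_one {R : Type*} [CommRing R]
    (K : Matrix (Fin 2) (Fin 2) R) : K * K = K.trace • K - K.det • 1 := by
  ext i j
  fin_cases i <;> fin_cases j <;> simp [mul_apply, trace_fin_two, det_fin_two] <;> ring

lemma trace_eq_zero_of_mul_self_eq_smul_one {F : Type*} [Field F] {K : Matrix (Fin 2) (Fin 2) F}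
    {c : F} (hK : ¬∃ a : F, K = a • 1) (h : K * K = c • 1) : K.trace = 0 := by
  by_contra htr
  refine hK ⟨K.trace⁻¹ * (c + K.det), ?_⟩
  have : K.trace • K = (c + K.det) • 1 := by
    rw [add_smul, ← h, mul_self_eq_trace_smul_sub_det_smul_one, sub_add_cancel]
  rw [mul_smul, ← this, smul_smul, inv_mul_cancel₀ htr, one_smul]

variable {n : Type*} [Fintype n] [DecidableEq n]

lemma conjTranspose_mul_self_add_smul_one (A : Matrix n n ℂ) (t : ℝ) :
    (A + (t : ℂ) • 1)ᴴ * (A + (t : ℂ) • 1) =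
      Aᴴ * A + (t : ℂ) • (Aᴴ + A) + ((t ^ 2 : ℝ) : ℂ) • 1 := by
  simp only [conjTranspose_add, conjTranspose_smul, conjTranspose_one, Complex.star_def,
    Complex.conj_ofReal, add_mul, mul_add, smul_mul, Matrix.mul_smul, mul_one, one_mul, smul_smul]
  push_cast
  module

lemma conjTranspose_mul_self_smul_one_add_of_conjTranspose_eq_neg {K : Matrix n n ℂ}
    (hK : Kᴴ = -K) (u : ℝ) :
    ((u : ℂ) • 1 + K)ᴴ * ((u : ℂ) • 1 + K) = ((u ^ 2 : ℝ) : ℂ) • 1 - K * K := by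
  simp only [conjTranspose_add, conjTranspose_smul, conjTranspose_one, Complex.star_def,
    Complex.conj_ofReal, hK, add_mul, mul_add, smul_mul, Matrix.mul_smul, mul_one, one_mul,
    smul_smul, neg_mul]
  push_cast
  module

lemma exists_smul_unitary_iff [Nonempty n] (M : Matrix n n ℂ) :
    (∃ (c : ℂ) (U : Matrix n n ℂ), Uᴴ * U = 1 ∧ M = c • U) ↔
      ∃ s : ℝ, Mᴴ * M = (s : ℂ) • 1 := by
  constructor
  · rintro ⟨c, U, hU, rfl⟩
    refine ⟨Complex.normSq c, ?_⟩
    rw [conjTranspose_smul, smul_mul, Matrix.mul_smul, hU, smul_smul,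
      Complex.normSq_eq_conj_mul_self]
    rfl
  · rintro ⟨s, hs⟩
    have hs_nonneg : 0 ≤ s := by
      have := (posSemidef_conjTranspose_mul_self M).diag_nonneg (i := Classical.arbitrary n)
      simpa [hs, Complex.zero_le_real] using this
    rcases hs_nonneg.eq_or_lt with rfl | hs_pos
    · have hM : M = 0 := conjTranspose_mul_self_eq_zero.mp (by simpa using hs)
      exact ⟨0, 1, by simp, by simp [hM]⟩
    · have hc : ((√s : ℝ) : ℂ) ≠ 0 := by exact_mod_cast (Real.sqrt_pos.mpr hs_pos).ne'
      refine ⟨√s, ((√s : ℝ) : ℂ)⁻¹ • M, ?_, by rw [smul_smul, mul_inv_cancel₀ hc, one_smul]⟩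
      rw [conjTranspose_smul, smul_mul, Matrix.mul_smul, hs, smul_smul, smul_smul, star_inv₀,
        Complex.star_def, Complex.conj_ofReal, ← Complex.ofReal_inv, ← Complex.ofReal_mul,
        ← Complex.ofReal_mul, ← mul_inv, Real.mul_self_sqrt hs_pos.le, inv_mul_cancel₀ hs_pos.ne',
        Complex.ofReal_one, one_smul]

lemma exists_conjTranspose_sub_smul_one_eq_neg
    {A : Matrix n n ℂ}
    (h : ∀ t : ℝ, ∃ s : ℝ, (A + (t : ℂ) • 1)ᴴ * (A + (t : ℂ) • 1) = (s : ℂ) • 1) :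
    ∃ r : ℝ, (A - (r : ℂ) • 1)ᴴ = -(A - (r : ℂ) • 1) := by
  obtain ⟨s₀, h₀⟩ := h 0
  obtain ⟨s₁, h₁⟩ := h 1
  rw [conjTranspose_mul_self_add_smul_one] at h₀ h₁
  have hsum : Aᴴ + A = ((s₁ - s₀ - 1 : ℝ) : ℂ) • 1 := by
    rw [Complex.ofReal_sub, Complex.ofReal_sub, sub_smul, sub_smul, ← h₀, ← h₁]
    push_cast
    module
  refine ⟨(s₁ - s₀ - 1) / 2, ?_⟩
  rw [conjTranspose_sub, conjTranspose_smul, conjTranspose_one, Complex.star_def,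
    Complex.conj_ofReal, eq_neg_iff_add_eq_zero]
  rw [show ∀ r : ℝ, Aᴴ - (r : ℂ) • 1 + (A - (r : ℂ) • 1) = (Aᴴ + A) - ((2 * r : ℝ) : ℂ) • 1 by
    intro r; push_cast; module, hsum, mul_div_cancel₀ _ two_ne_zero, sub_self]

end Matrix

/-- For a nonscalar 2×2 complex matrix A, A + tI is a scalar multiple of a unitary for
every real t iff A = rI + K with r real and K trace-zero skew-Hermitian. -/
theorem stmt12 (A : Matrix (Fin 2) (Fin 2) ℂ) (hA : ¬∃ c : ℂ, A = c • (1 : Matrix (Fin 2) (Fin 2) ℂ)) :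
    (∀ t : ℝ, ∃ (c : ℂ) (U : Matrix (Fin 2) (Fin 2) ℂ), Uᴴ * U = 1 ∧
        A + (t : ℂ) • (1 : Matrix (Fin 2) (Fin 2) ℂ) = c • U) ↔
      (∃ (r : ℝ) (K : Matrix (Fin 2) (Fin 2) ℂ), Kᴴ = -K ∧ K.trace = 0 ∧
        A = (r : ℂ) • (1 : Matrix (Fin 2) (Fin 2) ℂ) + K) := by
  simp only [exists_smul_unitary_iff]
  constructor
  · intro h
    obtain ⟨r, hskew⟩ := exists_conjTranspose_sub_smul_one_eq_neg h
    set K := A - (r : ℂ) • 1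
    obtain ⟨s, hs⟩ := h (-r)
    have hKK : K * K = -(s : ℂ) • 1 := by
      have hA_shift : A + ((-r : ℝ) : ℂ) • 1 = K := by
        push_cast
        rw [neg_smul, ← sub_eq_add_neg]
      rw [hA_shift, hskew, neg_mul] at hs
      rw [neg_smul, ← hs, neg_neg]
    have hK_nonscalar : ¬∃ a : ℂ, K = a • 1 := by
      rintro ⟨a, ha⟩
      exact hA ⟨a + r, by rw [add_smul, ← ha, sub_add_cancel]⟩
    exact ⟨r, K, hskew, trace_eq_zero_of_mul_self_eq_smul_one hK_nonscalar hKK,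
      (add_sub_cancel _ _).symm⟩
  · rintro ⟨r, K, hskew, htr, rfl⟩ t
    have hdet : ((K.det.re : ℝ) : ℂ) = K.det := by
      rw [← Complex.conj_eq_iff_re, ← Complex.star_def, ← det_conjTranspose, hskew, det_neg,
        Fintype.card_fin, neg_one_sq, one_mul]
    refine ⟨(r + t) ^ 2 + K.det.re, ?_⟩
    rw [show (r : ℂ) • 1 + K + (t : ℂ) • 1 = ((r + t : ℝ) : ℂ) • 1 + K by push_cast; module,
      conjTranspose_mul_self_smul_one_add_of_conjTranspose_eq_neg hskew,
      mul_self_eq_trace_smul_sub_det_smul_one, htr, zero_smul, zero_sub, sub_neg_eq_add, ← add_smul]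
    push_cast
    rw [hdet]
end

section
/- Let D ∈ M₃(ℝ) be diagonal positive definite. If D⁻¹(𝔸₃(ℝ) + ℝI) = (𝔸₃(ℝ) + ℝI)D⁻¹ as sets, where 𝔸₃(ℝ) is the space of 3×3 real skew-symmetric matrices, then D is a scalar matrix. -/
open scoped Matrix Matrix.Norms.L2Operator

noncomputable section

/-!
Conjugating the elementary skew matrix `A = Eᵢⱼ - Eⱼᵢ` by `D = diag d` gives
`D⁻¹ A D = (dⱼ / dᵢ) Eᵢⱼ - (dᵢ / dⱼ) Eⱼᵢ`. The hypothesis says this lies in `𝔸₃(ℝ) + ℝI`, whose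
off-diagonal part is skew, so `dⱼ / dᵢ = dᵢ / dⱼ`, i.e. `dᵢ² = dⱼ²`, and positivity gives
`dᵢ = dⱼ`.
-/

namespace Matrix

variable {n R : Type*} [DecidableEq n]

theorem transpose_single_sub_single [Ring R] (i j : n) :
    (single i j (1 : R) - single j i 1)ᵀ = -(single i j 1 - single j i 1) := by
  rw [transpose_sub, transpose_single, transpose_single, neg_sub]

theorem mul_eq_mul_of_inv_mul_eq_mul_inv [Fintype n] [CommRing R] {D A M : Matrix n n R}
    (hD : IsUnit D.det) (h : D⁻¹ * A = M * D⁻¹) : A * D = D * M := by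
  calc A * D = D * (D⁻¹ * A) * D := by rw [← Matrix.mul_assoc, mul_nonsing_inv _ hD, one_mul]
    _ = D * M * (D⁻¹ * D) := by rw [h, Matrix.mul_assoc, Matrix.mul_assoc, Matrix.mul_assoc]
    _ = D * M := by rw [nonsing_inv_mul _ hD, mul_one]

/-- Comparing the `(i, j)` and `(j, i)` entries gives `dⱼ = dᵢ Bᵢⱼ` and `dᵢ = dⱼ Bᵢⱼ`. -/
theorem sq_eq_sq_of_single_sub_single_mul_diagonal [Fintype n] [CommRing R] {d : n → R}
    {i j : n} (hij : i ≠ j) {B : Matrix n n R} (hB : Bᵀ = -B) {m : R}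
    (h : (single i j 1 - single j i 1) * diagonal d = diagonal d * (B + m • 1)) :
    d i ^ 2 = d j ^ 2 := by
  have hij_entry := congrFun (congrFun h i) j
  have hji_entry := congrFun (congrFun h j) i
  have hB_skew : B j i = -B i j := by simpa using congrFun (congrFun hB i) j
  simp only [mul_diagonal, diagonal_mul, sub_apply, add_apply, smul_apply, smul_eq_mul,
    single_apply_same, single_apply_of_ne, one_apply_ne, hij, hij.symm, ne_eq, and_self,
    not_false_eq_true, sub_zero, zero_sub, one_mul, mul_zero, add_zero, neg_mul, mul_neg, neg_inj,
    hB_skew] at hij_entry hji_entry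
  linear_combination d i * hji_entry - d j * hij_entry

end Matrix

open Matrix in
/-- If D is diagonal positive definite and D⁻¹(𝔸₃(ℝ)+ℝI) = (𝔸₃(ℝ)+ℝI)D⁻¹ as sets, then
D is scalar. -/
theorem stmt13 (d : Fin 3 → ℝ) (hpos : ∀ i, 0 < d i)
    (D : Matrix (Fin 3) (Fin 3) ℝ) (hD : D = Matrix.diagonal d)
    (h : {X : Matrix (Fin 3) (Fin 3) ℝ | ∃ (A : Matrix (Fin 3) (Fin 3) ℝ) (l : ℝ),
            Aᵀ = -A ∧ X = D⁻¹ * (A + l • (1 : Matrix (Fin 3) (Fin 3) ℝ))}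
        = {X : Matrix (Fin 3) (Fin 3) ℝ | ∃ (B : Matrix (Fin 3) (Fin 3) ℝ) (m : ℝ),
            Bᵀ = -B ∧ X = (B + m • (1 : Matrix (Fin 3) (Fin 3) ℝ)) * D⁻¹}) :
    ∃ c : ℝ, D = c • (1 : Matrix (Fin 3) (Fin 3) ℝ) := by
  subst hD
  have hdet : IsUnit (diagonal d).det := by
    rw [det_diagonal]
    exact (Finset.prod_pos fun i _ => hpos i).ne'.isUnit
  have hconst : ∀ i j, d i = d j := by
    intro i j
    by_cases hij : i = j
    · rw [hij]
    obtain ⟨B, m, hB, hconj⟩ := (Set.ext_iff.1 h _).1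
      ⟨single i j 1 - single j i 1, 0, transpose_single_sub_single i j, rfl⟩
    rw [zero_smul, add_zero] at hconj
    have hsq := sq_eq_sq_of_single_sub_single_mul_diagonal hij hB
      (mul_eq_mul_of_inv_mul_eq_mul_inv hdet hconj)
    exact (sq_eq_sq₀ (hpos i).le (hpos j).le).1 hsq
  refine ⟨d 0, ?_⟩
  rw [smul_one_eq_diagonal]
  exact congrArg diagonal (funext fun i => hconst i 0)
end
end

section
/- Let D ∈ M₃(ℂ) be diagonal positive definite with decreasing diagonal entries, and suppose D is not scalar. Then the real vector space D⁻¹(𝔸₃(ℂ)+ℝI) ∩ (𝔸₃(ℂ)+ℝI)D⁻¹ has real dimension at most 6, where 𝔸₃(ℂ) denotes 3×3 skew-Hermitian complex matrices. -/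
/-!
If `X = D⁻¹(S + λI) = (S' + μI)D⁻¹` with `S, S'` skew-Hermitian, then `DX + (DX)ᴴ = 2λI` and
`XD + (XD)ᴴ = 2μI`. Entrywise this gives `(d_j² - d_k²) X_jk = 0` off the diagonal, so
`X_jk = X_kj = 0` unless `d_j = d_k`; since `d` is not constant, at most one off-diagonal pair
survives, and `X_kj = -conj X_jk` there. On the diagonal `Re X_jj = λ / d_j`. Hence
`X ↦ (X₀₀, X₀₁ + X₀₂ + X₁₂, Im X₁₁, Im X₂₂) ∈ ℂ × ℂ × ℝ × ℝ` is injective on the intersection.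
-/

open Complex ComplexConjugate Matrix

theorem exists_star_add_self_eq_smul_one_of_mem_skewAdjoint_sup_span_one
    {A : Type*} [Ring A] [StarRing A] [Module ℝ A] [StarModule ℝ A] {x : A}
    (hx : x ∈ skewAdjoint.submodule ℝ A ⊔ Submodule.span ℝ {1}) :
    ∃ r : ℝ, star x + x = r • (1 : A) := by
  obtain ⟨S, hS, T, hT, rfl⟩ := Submodule.mem_sup.mp hx
  obtain ⟨c, rfl⟩ := Submodule.mem_span_singleton.mp hT
  refine ⟨2 * c, ?_⟩
  rw [star_add, skewAdjoint.mem_iff.mp hS, star_smul, star_trivial, star_one]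
  module

theorem eq_zero_of_add_add_eq_zero_of_not_forall_eq {d : Fin 3 → ℝ} (hns : ¬∀ i j, d i = d j)
    {a b c : ℂ} (ha : d 0 ≠ d 1 → a = 0) (hb : d 0 ≠ d 2 → b = 0) (hc : d 1 ≠ d 2 → c = 0)
    (h : a + b + c = 0) : a = 0 ∧ b = 0 ∧ c = 0 := by
  by_cases e01 : d 0 = d 1
  · have e02 : d 0 ≠ d 2 := fun e02 ↦ hns fun i j ↦ by
      fin_cases i <;> fin_cases j <;> simp [← e01, ← e02]
    have hb := hb e02
    have hc := hc (e01 ▸ e02)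
    exact ⟨by linear_combination h - hb - hc, hb, hc⟩
  have ha := ha e01
  by_cases e02 : d 0 = d 2
  · have hc := hc (e02 ▸ Ne.symm e01)
    exact ⟨ha, by linear_combination h - ha - hc, hc⟩
  have hb := hb e02
  exact ⟨ha, hb, by linear_combination h - ha - hb⟩

namespace Matrix

variable {n : Type*} [DecidableEq n]

theorem real_smul_one_apply (r : ℝ) (j k : n) :
    (r • (1 : Matrix n n ℂ)) j k = if j = k then (r : ℂ) else 0 := by
  split_ifs with h <;> simp [h, Complex.real_smul]

section

variable [Fintype n]

theorem mul_mem_of_mem_map_mulLeft_inv {K : Type*} [CommRing K] [Algebra ℝ K]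
    {D X : Matrix n n K} (hD : IsUnit D.det) {V : Submodule ℝ (Matrix n n K)}
    (hX : X ∈ V.map (LinearMap.mulLeft ℝ D⁻¹)) : D * X ∈ V := by
  obtain ⟨A, hA, rfl⟩ := hX
  rwa [LinearMap.mulLeft_apply, mul_nonsing_inv_cancel_left _ _ hD]

theorem mul_mem_of_mem_map_mulRight_inv {K : Type*} [CommRing K] [Algebra ℝ K]
    {D X : Matrix n n K} (hD : IsUnit D.det) {V : Submodule ℝ (Matrix n n K)}
    (hX : X ∈ V.map (LinearMap.mulRight ℝ D⁻¹)) : X * D ∈ V := by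
  obtain ⟨A, hA, rfl⟩ := hX
  rwa [LinearMap.mulRight_apply, nonsing_inv_mul_cancel_right _ _ hD]

variable {d : n → ℝ} {X : Matrix n n ℂ} {r s : ℝ}

theorem apply_add_conj_of_star_diagonal_mul_add_eq
    (h : star (diagonal (fun i => (d i : ℂ)) * X) + diagonal (fun i => (d i : ℂ)) * X = r • 1)
    (j k : n) : d j * X j k + d k * conj (X k j) = if j = k then (r : ℂ) else 0 := by
  have h := congrFun (congrFun h j) k
  rw [add_apply, star_apply, diagonal_mul, diagonal_mul, star_mul', star_def, conj_ofReal,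
    real_smul_one_apply] at h
  linear_combination h

theorem apply_add_conj_of_star_mul_diagonal_add_eq
    (h : star (X * diagonal (fun i => (d i : ℂ))) + X * diagonal (fun i => (d i : ℂ)) = s • 1)
    (j k : n) : d k * X j k + d j * conj (X k j) = if j = k then (s : ℂ) else 0 := by
  have h := congrFun (congrFun h j) k
  rw [add_apply, star_apply, mul_diagonal, mul_diagonal, star_mul', star_def, conj_ofReal,
    real_smul_one_apply] at h
  linear_combination h

end

variable {d : n → ℝ} {X : Matrix n n ℂ} {r s : ℝ} {i j k : n}

theorem apply_eq_zero_of_apply_add_conj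
    (hL : ∀ j k, d j * X j k + d k * conj (X k j) = if j = k then (r : ℂ) else 0)
    (hR : ∀ j k, d k * X j k + d j * conj (X k j) = if j = k then (s : ℂ) else 0)
    (hjk : j ≠ k) (hd : d j ≠ d k) (hd' : d j + d k ≠ 0) : X j k = 0 := by
  have hL := hL j k
  have hR := hR j k
  rw [if_neg hjk] at hL hR
  have h : (((d j - d k) * (d j + d k) : ℝ) : ℂ) * X j k = 0 := by
    push_cast
    linear_combination (d j : ℂ) * hL - (d k : ℂ) * hR
  exact (mul_eq_zero.mp h).resolve_left (by exact_mod_cast mul_ne_zero (sub_ne_zero.mpr hd) hd')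

theorem apply_swap_eq_zero_of_apply_add_conj
    (hL : ∀ j k, d j * X j k + d k * conj (X k j) = if j = k then (r : ℂ) else 0)
    (hjk : j ≠ k) (hk : d k ≠ 0) (h : X j k = 0) : X k j = 0 := by
  simpa [hjk, h, hk] using hL j k

theorem re_apply_self_eq_zero_of_apply_add_conj
    (hL : ∀ j k, d j * X j k + d k * conj (X k j) = if j = k then (r : ℂ) else 0)
    (hi : X i i = 0) (hj : d j ≠ 0) : (X j j).re = 0 := by
  have hr : (r : ℂ) = 0 := by simpa [hi] using (hL i i).symm
  have h := congrArg re (hL j j)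
  simp only [if_pos, add_re, re_ofReal_mul, conj_re, hr, zero_re] at h
  have : d j * (X j j).re = 0 := by linarith
  exact (mul_eq_zero.mp this).resolve_left hj

theorem fin_three_eq_zero_of_apply_add_conj {d : Fin 3 → ℝ} (hpos : ∀ i, 0 < d i)
    (hns : ¬∀ i j, d i = d j) {X : Matrix (Fin 3) (Fin 3) ℂ}
    (hL : ∀ j k, d j * X j k + d k * conj (X k j) = if j = k then (r : ℂ) else 0)
    (hR : ∀ j k, d k * X j k + d j * conj (X k j) = if j = k then (s : ℂ) else 0)
    (h00 : X 0 0 = 0) (hupper : X 0 1 + X 0 2 + X 1 2 = 0) (h11 : (X 1 1).im = 0)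
    (h22 : (X 2 2).im = 0) : X = 0 := by
  have hd i : d i ≠ 0 := (hpos i).ne'
  have off {j k : Fin 3} (hjk : j ≠ k) (hd : d j ≠ d k) : X j k = 0 :=
    apply_eq_zero_of_apply_add_conj hL hR hjk hd (add_pos (hpos j) (hpos k)).ne'
  obtain ⟨h01, h02, h12⟩ := eq_zero_of_add_add_eq_zero_of_not_forall_eq hns
    (off (by decide)) (off (by decide)) (off (by decide)) hupper
  have swap {j k : Fin 3} (hjk : j ≠ k) (h : X j k = 0) : X k j = 0 :=
    apply_swap_eq_zero_of_apply_add_conj hL hjk (hd k) h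
  have diag {j : Fin 3} (him : (X j j).im = 0) : X j j = 0 :=
    Complex.ext (re_apply_self_eq_zero_of_apply_add_conj hL h00 (hd j)) him
  ext i j
  fin_cases i <;> fin_cases j
  exacts [h00, h01, h02, swap (by decide) h01, diag h11, h12, swap (by decide) h02,
    swap (by decide) h12, diag h22]

end Matrix

theorem stmt16_general (d : Fin 3 → ℝ) (hpos : ∀ i, 0 < d i)
    (hns : ¬∀ i j : Fin 3, d i = d j)
    (D : Matrix (Fin 3) (Fin 3) ℂ) (hD : D = Matrix.diagonal fun i => (d i : ℂ))
    (V : Submodule ℝ (Matrix (Fin 3) (Fin 3) ℂ))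
    (hV : V = skewAdjoint.submodule ℝ (Matrix (Fin 3) (Fin 3) ℂ)
        ⊔ Submodule.span ℝ ({1} : Set (Matrix (Fin 3) (Fin 3) ℂ))) :
    Module.finrank ℝ
      ↥(Submodule.map (LinearMap.mulLeft ℝ D⁻¹) V ⊓ Submodule.map (LinearMap.mulRight ℝ D⁻¹) V)
      ≤ 6 := by
  subst hD hV
  have hdet : IsUnit (diagonal fun i => (d i : ℂ)).det :=
    (isUnit_iff_isUnit_det _).mp <| isUnit_diagonal.mpr <|
      Pi.isUnit_iff.mpr fun i => (ofReal_ne_zero.mpr (hpos i).ne').isUnit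
  let e : Fin 3 → Fin 3 → Matrix (Fin 3) (Fin 3) ℂ →ₗ[ℝ] ℂ := entryLinearMap ℝ ℂ
  let f : Matrix (Fin 3) (Fin 3) ℂ →ₗ[ℝ] ℂ × ℂ × ℝ × ℝ :=
    (e 0 0).prod ((e 0 1 + e 0 2 + e 1 2).prod ((imLm ∘ₗ e 1 1).prod (imLm ∘ₗ e 2 2)))
  refine (LinearMap.finrank_le_finrank_of_injective (f := f.domRestrict _) ?_).trans_eq
    (by simp [Module.finrank_prod, finrank_real_complex])
  rw [← LinearMap.ker_eq_bot, LinearMap.ker_eq_bot']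
  rintro ⟨X, hXl, hXr⟩ hfX
  obtain ⟨r, hr⟩ := exists_star_add_self_eq_smul_one_of_mem_skewAdjoint_sup_span_one
    (mul_mem_of_mem_map_mulLeft_inv hdet hXl)
  obtain ⟨s, hs⟩ := exists_star_add_self_eq_smul_one_of_mem_skewAdjoint_sup_span_one
    (mul_mem_of_mem_map_mulRight_inv hdet hXr)
  simp only [f, e, LinearMap.domRestrict_apply, LinearMap.prod_apply, Function.prod,
    LinearMap.add_apply, LinearMap.comp_apply, entryLinearMap_apply, imLm_coe,
    Prod.mk_eq_zero] at hfX
  obtain ⟨h00, hupper, h11, h22⟩ := hfX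
  exact Subtype.ext <| fin_three_eq_zero_of_apply_add_conj hpos hns
    (apply_add_conj_of_star_diagonal_mul_add_eq hr)
    (apply_add_conj_of_star_mul_diagonal_add_eq hs) h00 hupper h11 h22

/-- For D diagonal positive definite with decreasing, non-constant diagonal, the real
space D⁻¹(𝔸₃(ℂ)+ℝI) ∩ (𝔸₃(ℂ)+ℝI)D⁻¹ has real dimension at most 6. -/
theorem stmt16 (d : Fin 3 → ℝ) (hpos : ∀ i, 0 < d i)
    (hmono : ∀ i j : Fin 3, i ≤ j → d j ≤ d i) (hns : ¬∀ i j : Fin 3, d i = d j)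
    (D : Matrix (Fin 3) (Fin 3) ℂ) (hD : D = Matrix.diagonal fun i => (d i : ℂ))
    (V : Submodule ℝ (Matrix (Fin 3) (Fin 3) ℂ))
    (hV : V = skewAdjoint.submodule ℝ (Matrix (Fin 3) (Fin 3) ℂ)
        ⊔ Submodule.span ℝ ({1} : Set (Matrix (Fin 3) (Fin 3) ℂ))) :
    Module.finrank ℝ
      ↥(Submodule.map (LinearMap.mulLeft ℝ D⁻¹) V ⊓ Submodule.map (LinearMap.mulRight ℝ D⁻¹) V)
      ≤ 6 :=
  stmt16_general d hpos hns D hD V hV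
end

section
/- Fix c > 0 and define the linear map Φ_c : M₂(ℝ) → M₂(ℝ) that is the identity on span{I₂, E₁₂−E₂₁} and multiplication by c on span{E₁₁−E₂₂, E₁₂+E₂₁}. Then for all A, B ∈ M₂(ℝ): if ‖AB‖ = ‖A‖·‖B‖ (spectral norm) then ‖Φ_c(A)Φ_c(B)‖ = ‖Φ_c(A)‖·‖Φ_c(B)‖. -/
/-!
Identify `ℝ²` with `ℂ`. Every real `2 × 2` matrix is the map `v ↦ z v + w v̄` for unique
`z, w : ℂ`, its spectral norm is `‖z‖ + ‖w‖`, and `Φ_c` replaces `w` by `c w`. Composition gives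
`(z₁, w₁)(z₂, w₂) = (z₁ z₂ + w₁ w̄₂, z₁ w₂ + w₁ z̄₂)`, so `‖AB‖ = ‖A‖‖B‖` says exactly that both
triangle inequalities `‖z₁ z₂ + w₁ w̄₂‖ ≤ ‖z₁ z₂‖ + ‖w₁ w̄₂‖` and
`‖z₁ w₂ + w₁ z̄₂‖ ≤ ‖z₁ w₂‖ + ‖w₁ z̄₂‖` are equalities, i.e. that the two pairs of summands lie on
a common ray. Under `Φ_c` the second summand of the first pair is scaled by `c²` and both summands
of the second pair by `c`, which keeps them on a common ray.
-/

open scoped Matrix Matrix.Norms.L2Operator ComplexConjugate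

/-- The matrix, in the basis `1, i`, of the `ℝ`-linear map `v ↦ z * v + w * conj v` on `ℂ`. -/
def complexPairMatrix (z w : ℂ) : Matrix (Fin 2) (Fin 2) ℝ :=
  !![z.re + w.re, -z.im + w.im; z.im + w.im, z.re - w.re]

theorem exists_complexPairMatrix_eq (A : Matrix (Fin 2) (Fin 2) ℝ) :
    ∃ z w, complexPairMatrix z w = A :=
  ⟨⟨(A 0 0 + A 1 1) / 2, (A 1 0 - A 0 1) / 2⟩, ⟨(A 0 0 - A 1 1) / 2, (A 0 1 + A 1 0) / 2⟩, by
    ext i j; fin_cases i <;> fin_cases j <;> simp [complexPairMatrix] <;> ring⟩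

theorem complexPairMatrix_eq_add (z w : ℂ) :
    complexPairMatrix z w = !![z.re, -z.im; z.im, z.re] + !![w.re, w.im; w.im, -w.re] := by
  ext i j
  fin_cases i <;> fin_cases j <;> simp [complexPairMatrix, sub_eq_add_neg, add_comm]

theorem complexPairMatrix_mul (z₁ w₁ z₂ w₂ : ℂ) :
    complexPairMatrix z₁ w₁ * complexPairMatrix z₂ w₂ =
      complexPairMatrix (z₁ * z₂ + w₁ * conj w₂) (z₁ * w₂ + w₁ * conj z₂) := by
  ext i j
  fin_cases i <;> fin_cases j <;>
    simp [complexPairMatrix, Matrix.mul_apply, Fin.sum_univ_two] <;> ring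

theorem complexPairMatrix_mulVec (z w x : ℂ) :
    (EuclideanSpace.equiv (Fin 2) ℝ).symm
        (complexPairMatrix z w *ᵥ Complex.orthonormalBasisOneI.repr x) =
      Complex.orthonormalBasisOneI.repr (z * x + w * conj x) := by
  ext i
  fin_cases i <;>
    simp [complexPairMatrix, Complex.orthonormalBasisOneI_repr_apply] <;> ring

theorem Complex.exists_norm_eq_one_norm_mul_add_mul_conj (z w : ℂ) :
    ∃ u : ℂ, ‖u‖ = 1 ∧ ‖z * u + w * conj u‖ = ‖z‖ + ‖w‖ := by
  -- `z * u` and `w * conj u` both get the argument `(arg z + arg w) / 2`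
  let θ : ℝ := (w.arg - z.arg) / 2
  refine ⟨exp (θ * I), norm_exp_ofReal_mul_I θ, ?_⟩
  have : z * exp (θ * I) + w * conj (exp (θ * I)) =
      ((‖z‖ + ‖w‖ : ℝ) : ℂ) * exp (((z.arg + w.arg) / 2 : ℝ) * I) := by
    rw [← exp_conj, map_mul, conj_ofReal, conj_I]
    conv_lhs => rw [← norm_mul_exp_arg_mul_I z, ← norm_mul_exp_arg_mul_I w]
    simp only [mul_assoc, ← exp_add, θ]
    push_cast
    ring_nf
  rw [this, norm_mul, norm_exp_ofReal_mul_I, mul_one, norm_real, Real.norm_of_nonneg (by positivity)]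

theorem norm_complexPairMatrix (z w : ℂ) : ‖complexPairMatrix z w‖ = ‖z‖ + ‖w‖ := by
  set e := Complex.orthonormalBasisOneI.repr
  apply le_antisymm
  · refine ContinuousLinearMap.opNorm_le_bound _ (by positivity) fun x => ?_
    obtain ⟨y, rfl⟩ := e.surjective x
    calc ‖(EuclideanSpace.equiv (Fin 2) ℝ).symm (complexPairMatrix z w *ᵥ e y)‖
        = ‖z * y + w * conj y‖ := by rw [complexPairMatrix_mulVec, e.norm_map]
      _ ≤ ‖z * y‖ + ‖w * conj y‖ := norm_add_le _ _
      _ = (‖z‖ + ‖w‖) * ‖e y‖ := by rw [e.norm_map, norm_mul, norm_mul, Complex.norm_conj]; ring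
  · obtain ⟨u, hu, hzw⟩ := Complex.exists_norm_eq_one_norm_mul_add_mul_conj z w
    have := Matrix.l2_opNorm_mulVec (complexPairMatrix z w) (e u)
    rwa [complexPairMatrix_mulVec, e.norm_map, e.norm_map, hu, hzw, mul_one] at this

theorem norm_complexPairMatrix_mul_eq_iff (z₁ w₁ z₂ w₂ : ℂ) :
    ‖complexPairMatrix z₁ w₁ * complexPairMatrix z₂ w₂‖ =
        ‖complexPairMatrix z₁ w₁‖ * ‖complexPairMatrix z₂ w₂‖ ↔
      SameRay ℝ (z₁ * z₂) (w₁ * conj w₂) ∧ SameRay ℝ (z₁ * w₂) (w₁ * conj z₂) := by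
  have h₁ := norm_add_le (z₁ * z₂) (w₁ * conj w₂)
  have h₂ := norm_add_le (z₁ * w₂) (w₁ * conj z₂)
  simp only [norm_mul, Complex.norm_conj] at h₁ h₂
  rw [complexPairMatrix_mul, norm_complexPairMatrix, norm_complexPairMatrix,
    norm_complexPairMatrix, sameRay_iff_norm_add, sameRay_iff_norm_add]
  simp only [norm_mul, Complex.norm_conj]
  constructor
  · exact fun h => ⟨by linarith, by linarith⟩
  · rintro ⟨e₁, e₂⟩
    rw [e₁, e₂]
    ring

theorem stmt18_general (c : ℝ) (Phi : Matrix (Fin 2) (Fin 2) ℝ → Matrix (Fin 2) (Fin 2) ℝ)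
    (hlin : IsLinearMap ℝ Phi)
    (h1 : ∀ a b : ℝ, Phi !![a, b; -b, a] = !![a, b; -b, a])
    (h2 : ∀ a b : ℝ, Phi !![a, b; b, -a] = c • !![a, b; b, -a]) :
    ∀ A B : Matrix (Fin 2) (Fin 2) ℝ, ‖A * B‖ = ‖A‖ * ‖B‖ →
      ‖Phi A * Phi B‖ = ‖Phi A‖ * ‖Phi B‖ := by
  have hPhi (z w : ℂ) : Phi (complexPairMatrix z w) = complexPairMatrix z (c * w) := by
    have h1' := h1 z.re (-z.im)
    rw [neg_neg] at h1'
    rw [complexPairMatrix_eq_add, hlin.map_add, h1', h2, complexPairMatrix_eq_add]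
    ext i j
    fin_cases i <;> fin_cases j <;> simp
  intro A B hAB
  obtain ⟨z₁, w₁, rfl⟩ := exists_complexPairMatrix_eq A
  obtain ⟨z₂, w₂, rfl⟩ := exists_complexPairMatrix_eq B
  obtain ⟨hray₁, hray₂⟩ := (norm_complexPairMatrix_mul_eq_iff z₁ w₁ z₂ w₂).1 hAB
  rw [hPhi, hPhi, norm_complexPairMatrix_mul_eq_iff]
  constructor
  · have : (c : ℂ) * w₁ * conj (c * w₂) = (c ^ 2 : ℝ) • (w₁ * conj w₂) := by
      simp only [map_mul, Complex.conj_ofReal, Complex.real_smul]; push_cast; ring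
    rw [this]
    exact hray₁.nonneg_smul_right (sq_nonneg c)
  · simpa only [smul_eq_mul, mul_left_comm, mul_assoc] using hray₂.smul (c : ℂ)

/-- The map Φ_c (identity on span{I, E₁₂−E₂₁}, multiplication by c on
span{E₁₁−E₂₂, E₁₂+E₂₁}) preserves norm-multiplicative pairs. -/
theorem stmt18 (c : ℝ) (hc : 0 < c) (Phi : Matrix (Fin 2) (Fin 2) ℝ → Matrix (Fin 2) (Fin 2) ℝ)
    (hlin : IsLinearMap ℝ Phi)
    (h1 : ∀ a b : ℝ, Phi !![a, b; -b, a] = !![a, b; -b, a])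
    (h2 : ∀ a b : ℝ, Phi !![a, b; b, -a] = c • !![a, b; b, -a]) :
    ∀ A B : Matrix (Fin 2) (Fin 2) ℝ, ‖A * B‖ = ‖A‖ * ‖B‖ →
      ‖Phi A * Phi B‖ = ‖Phi A‖ * ‖Phi B‖ :=
  stmt18_general c Phi hlin h1 h2
end

section
/- Let e, f be orthonormal vectors in ℝ² and X ∈ M₂(ℝ). Then X attains its spectral norm at e (i.e., ‖Xe‖ = ‖X‖) if and only if Xe ⊥ Xf and ‖Xe‖ ≥ ‖Xf‖. -/
/-!
If `‖X e‖ = ‖X‖` for a unit vector `e`, then `e` maximises the Rayleigh quotient of `Xᵀ X`, hence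
is an eigenvector of it, and `⟪X e, X f⟫ = ⟪Xᵀ X e, f⟫ = 0`. Conversely, if `X` maps the orthonormal
basis `e, f` to orthogonal vectors, Pythagoras gives
`‖X (a e + c f)‖² = a² ‖X e‖² + c² ‖X f‖² ≤ (a² + c²) ‖X e‖²`.
-/
open scoped InnerProduct RealInnerProductSpace

variable {E F : Type*} [NormedAddCommGroup E] [InnerProductSpace ℝ E]
  [NormedAddCommGroup F] [InnerProductSpace ℝ F]

theorem norm_sq_sum_of_pairwise_inner_eq_zero {ι : Type*} (s : Finset ι) {v : ι → F}
    (hv : Pairwise fun i j ↦ ⟪v i, v j⟫ = 0) :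
    ‖∑ i ∈ s, v i‖ ^ 2 = ∑ i ∈ s, ‖v i‖ ^ 2 := by
  classical
  rw [← real_inner_self_eq_norm_sq, sum_inner]
  refine Finset.sum_congr rfl fun i hi ↦ ?_
  rw [inner_sum, Finset.sum_eq_single_of_mem i hi fun j _ hji ↦ hv hji.symm,
    real_inner_self_eq_norm_sq]

namespace ContinuousLinearMap

theorem isSelfAdjoint_adjoint_comp_self [CompleteSpace E] [CompleteSpace F] (T : E →L[ℝ] F) :
    IsSelfAdjoint (T† ∘L T) := by
  rw [isSelfAdjoint_iff', adjoint_comp, adjoint_adjoint]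

theorem inner_map_map_eq_zero_of_norm_map_eq [CompleteSpace E] [CompleteSpace F]
    {T : E →L[ℝ] F} {e f : E} (hTe : ‖T e‖ = ‖T‖ * ‖e‖) (hef : ⟪e, f⟫ = 0) :
    ⟪T e, T f⟫ = 0 := by
  have hmax : IsMaxOn (T† ∘L T).reApplyInnerSelf (Metric.sphere 0 ‖e‖) e := by
    refine isMaxOn_iff.mpr fun x hx ↦ ?_
    simp only [reApplyInnerSelf_apply, comp_apply, adjoint_inner_left,
      RCLike.re_to_real, real_inner_self_eq_norm_sq]
    rw [mem_sphere_zero_iff_norm] at hx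
    rw [hTe, ← hx]
    gcongr
    exact T.le_opNorm x
  have heig := (isSelfAdjoint_adjoint_comp_self T).eq_smul_self_of_isLocalExtrOn
    (Or.inr hmax.localize)
  rw [← adjoint_inner_left, ← comp_apply, heig, real_inner_smul_left, hef, mul_zero]

theorem opNorm_le_of_pairwise_inner_map_eq_zero {ι : Type*} [Fintype ι]
    (b : OrthonormalBasis ι ℝ E) (T : E →L[ℝ] F) {M : ℝ} (hM : 0 ≤ M)
    (horth : Pairwise fun i j ↦ ⟪T (b i), T (b j)⟫ = 0) (hle : ∀ i, ‖T (b i)‖ ≤ M) :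
    ‖T‖ ≤ M := by
  refine T.opNorm_le_bound hM fun x ↦ ?_
  have hTx : T x = ∑ i, b.repr x i • T (b i) := by
    conv_lhs => rw [← b.sum_repr x]
    simp only [map_sum, map_smul]
  have horth' : Pairwise fun i j ↦ ⟪b.repr x i • T (b i), b.repr x j • T (b j)⟫ = 0 :=
    fun i j hij ↦ by simp only [real_inner_smul_left, real_inner_smul_right, horth hij, mul_zero]
  refine pow_le_pow_iff_left₀ (norm_nonneg _) (by positivity) two_ne_zero |>.mp ?_
  calc ‖T x‖ ^ 2 = ∑ i, b.repr x i ^ 2 * ‖T (b i)‖ ^ 2 := by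
        simp only [hTx, norm_sq_sum_of_pairwise_inner_eq_zero _ horth', norm_smul, mul_pow,
          Real.norm_eq_abs, sq_abs]
    _ ≤ ∑ i, b.repr x i ^ 2 * M ^ 2 := by gcongr with i; exact hle i
    _ = (M * ‖x‖) ^ 2 := by
        rw [← Finset.sum_mul, mul_pow, ← b.repr.norm_map, EuclideanSpace.real_norm_sq_eq, mul_comm]

end ContinuousLinearMap

open scoped Matrix Matrix.Norms.L2Operator

/-- For orthonormal e, f in ℝ² and X ∈ M₂(ℝ): X attains its norm at e iff Xe ⊥ Xf and
‖Xf‖ ≤ ‖Xe‖. -/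
theorem stmt19 (e f : EuclideanSpace ℝ (Fin 2)) (he : ‖e‖ = 1) (hf : ‖f‖ = 1)
    (hef : inner ℝ e f = (0 : ℝ)) (X : Matrix (Fin 2) (Fin 2) ℝ) :
    ‖Matrix.toEuclideanCLM (𝕜 := ℝ) X e‖ = ‖X‖ ↔
      (inner ℝ (Matrix.toEuclideanCLM (𝕜 := ℝ) X e) (Matrix.toEuclideanCLM (𝕜 := ℝ) X f) = (0 : ℝ) ∧
        ‖Matrix.toEuclideanCLM (𝕜 := ℝ) X f‖ ≤ ‖Matrix.toEuclideanCLM (𝕜 := ℝ) X e‖) := by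
  rw [Matrix.cstar_norm_def]
  set T := Matrix.toEuclideanCLM (𝕜 := ℝ) X
  have hon : Orthonormal ℝ ![e, f] := by
    rw [orthonormal_iff_ite]
    intro i j
    fin_cases i <;> fin_cases j <;> simp [he, hf, hef, real_inner_comm e f]
  let b := OrthonormalBasis.mk hon
    (hon.linearIndependent.span_eq_top_of_card_eq_finrank (by simp)).ge
  have hb : ⇑b = ![e, f] := OrthonormalBasis.coe_mk _ _
  constructor
  · intro hTe
    refine ⟨T.inner_map_map_eq_zero_of_norm_map_eq (by rw [hTe, he, mul_one]) hef, ?_⟩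
    exact hTe ▸ T.unit_le_opNorm f hf.le
  · rintro ⟨hTef, hTfe⟩
    refine le_antisymm (T.unit_le_opNorm e he.le) ?_
    refine T.opNorm_le_of_pairwise_inner_map_eq_zero b (norm_nonneg _) ?_ ?_
    · rw [hb]
      intro i j hij
      fin_cases i <;> fin_cases j <;> simp_all [real_inner_comm]
    · rw [hb]
      intro i
      fin_cases i <;> simp [hTfe]
end
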